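/- If there exists an algorithm solving treasure hunt at cost C with advice of size A in all graphs with e edges and initial agent–treasure distance D, then there exists an algorithm solving rendezvous of two agents at cost C with advice of total size A+2 in all graphs with e edges and initial distance D between the agents. -/
import Mathlib


/-- A connected simple undirected network with labeled nodes (the labels are the
elements of `Fin n`) and local port numbers `0, …, deg v - 1` at each node `v`.
`port v p` is the node reached from `v` by taking port `p`. -/
structure PortedGraph where
  n : ℕ
  npos : 0 < n
  deg : Fin n → ℕ
  port : (v : Fin n) → Fin (deg v) → Fin n
  no_loop : ∀ v p, port v p ≠ v
  port_inj : ∀ v, Function.Injective (port v)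
  symm : ∀ v p, ∃ q : Fin (deg (port v p)), port (port v p) q = v
  conn : ∀ u v : Fin n, Relation.ReflTransGen (fun x y => ∃ p, port x p = y) u v

/-- The underlying simple graph of a ported network. -/
def PortedGraph.toSimpleGraph (N : PortedGraph) : SimpleGraph (Fin N.n) :=
  SimpleGraph.fromRel (fun x y => ∃ p, N.port x p = y)

/-- The port number at `w` of the edge leading back to `v` (0 if none). -/
noncomputable def PortedGraph.entry (N : PortedGraph) (v w : Fin N.n) : ℕ :=
  if h : ∃ q : Fin (N.deg w), N.port w q = v then (Classical.choose h).val else 0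

/-- A deterministic agent algorithm: given the advice string and the history of
observations (node label, node degree, entry port) at the visited nodes, it
outputs the port number to take next (an out-of-range number means staying put). -/
def Agent : Type := List Bool → List (ℕ × ℕ × ℕ) → ℕ

/-- The state (current node, observation history) of an agent after `t` rounds,
starting at node `s` with advice `adv`. -/
noncomputable def run (N : PortedGraph) (alg : Agent) (adv : List Bool) (s : Fin N.n) :
    ℕ → Fin N.n × List (ℕ × ℕ × ℕ)
  | 0 => (s, [(s.val, N.deg s, 0)])
  | t + 1 =>
      let st := run N alg adv s t
      let p := alg adv st.2
      if hp : p < N.deg st.1 then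
        let w := N.port st.1 ⟨p, hp⟩
        (w, st.2 ++ [(w.val, N.deg w, N.entry st.1 w)])
      else st

/-- The number of edge traversals performed by the agent during the first `T` rounds. -/
noncomputable def cost (N : PortedGraph) (alg : Agent) (adv : List Bool) (s : Fin N.n)
    (T : ℕ) : ℕ :=
  ((Finset.range T).filter (fun t => (run N alg adv s (t + 1)).1 ≠ (run N alg adv s t).1)).card

/-- `SolvesTH alg e D C A`: the algorithm solves treasure hunt at cost at most `C`
with advice of size at most `A` in all graphs with `e` edges and initial distance `D`
between the agent and the treasure. -/
def SolvesTH (alg : Agent) (e D C A : ℕ) : Prop :=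
  ∀ N : PortedGraph, (∑ v, N.deg v) = 2 * e →
    ∀ s tr : Fin N.n, N.toSimpleGraph.dist s tr = D →
      ∃ adv : List Bool, adv.length ≤ A ∧
        ∃ T : ℕ, (run N alg adv s T).1 = tr ∧ cost N alg adv s T ≤ C

/-- `SolvesRV alg e D C A`: the algorithm solves rendezvous of two (anonymous) agents,
moving in synchronous rounds, at total cost at most `C` with advice strings of total
size at most `A`, in all graphs with `e` edges and initial distance `D` between the
agents. -/
def SolvesRV (alg : Agent) (e D C A : ℕ) : Prop :=
  ∀ N : PortedGraph, (∑ v, N.deg v) = 2 * e →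
    ∀ sa sb : Fin N.n, sa ≠ sb → N.toSimpleGraph.dist sa sb = D →
      ∃ adva advb : List Bool, adva.length + advb.length ≤ A ∧
        ∃ T : ℕ, (run N alg adva sa T).1 = (run N alg advb sb T).1 ∧
          cost N alg adva sa T + cost N alg advb sb T ≤ C

/-- The rendezvous algorithm built from a treasure-hunt algorithm: advice
starting with `true` means "run the TH algorithm with the rest of the advice";
otherwise stay inert (output the degree of the current node, which is out of range). -/
def rvAlg (alg : Agent) : Agent :=
  fun adv hist =>
    match adv with
    | true :: rest => alg rest hist
    | _ => (hist.getLast?.getD (0, 0, 0)).2.1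

lemma run_active (N : PortedGraph) (alg : Agent) (adv : List Bool) (s : Fin N.n) (t : ℕ) :
    run N (rvAlg alg) (true :: adv) s t = run N alg adv s t := by
  induction t with
  | zero => rfl
  | succ t ih => simp only [run]; rw [ih]; rfl

lemma run_inert (N : PortedGraph) (alg : Agent) (s : Fin N.n) (t : ℕ) :
    run N (rvAlg alg) [false] s t = (s, [(s.val, N.deg s, 0)]) := by
  induction t with
  | zero => rfl
  | succ t ih =>
      simp only [run, ih, rvAlg]
      simp

lemma cost_active (N : PortedGraph) (alg : Agent) (adv : List Bool) (s : Fin N.n) (T : ℕ) :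
    cost N (rvAlg alg) (true :: adv) s T = cost N alg adv s T := by
  simp [cost, run_active]

lemma cost_inert (N : PortedGraph) (alg : Agent) (s : Fin N.n) (T : ℕ) :
    cost N (rvAlg alg) [false] s T = 0 := by
  simp [cost, run_inert]

theorem stmt_18 (e D C A : ℕ) (h : ∃ alg : Agent, SolvesTH alg e D C A) :
    ∃ alg : Agent, SolvesRV alg e D C (A + 2) := by
  obtain ⟨alg, halg⟩ := h
  refine ⟨rvAlg alg, ?_⟩
  intro N he sa sb _ hdist
  obtain ⟨adv, hlen, T, hT, hcost⟩ := halg N he sa sb hdist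
  refine ⟨true :: adv, [false], ?_, T, ?_, ?_⟩
  · simp only [List.length_cons, List.length_nil]; omega
  · rw [run_active, run_inert, hT]
  · rw [cost_active, cost_inert]
    simpa using hcost
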